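/- Let H_d be the degree-d normalized Hermite polynomial and t ≥ d² sufficiently large. Write H_d((X_1+⋯+X_t)/√t) = H^{ml} + H^{nml}, where H^{ml} collects the multilinear terms (those ∏ H_{d_i}(X_i) with all d_i ∈ {0,1}) in the Hermite multinomial expansion and H^{nml} the rest. Then ‖H^{nml}‖₂² ≤ C d²/t for an absolute constant C, where ‖·‖₂ is the L² norm with respect to the t-dimensional standard Gaussian measure. -/

import Mathlib

open Polynomial MeasureTheory ProbabilityTheory

/-- The standard Gaussian measure `N(0, I_t)` on `ℝ^t`. -/
noncomputable def stdGaussian (t : ℕ) : Measure (Fin t → ℝ) :=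
  Measure.pi fun _ => gaussianReal 0 1

/-- The normalized probabilists' Hermite polynomial `H_r(y) = He_r(y)/√(r!)`. -/
noncomputable def normHermite (r : ℕ) (y : ℝ) : ℝ :=
  (aeval y (Polynomial.hermite r)) / Real.sqrt (r.factorial)

/-- The non-multilinear part `H^{nml}` of the Hermite multinomial expansion of
`H_d((X₁+⋯+X_t)/√t)`: the sum of the terms `∏ᵢ H_{dᵢ}(Xᵢ)` in which some
`dᵢ ≥ 2`. -/
noncomputable def hermiteNml (t d : ℕ) (x : Fin t → ℝ) : ℝ :=
  ∑ m ∈ (Finset.Nat.antidiagonalTuple t d).filter (fun m => ∃ i, 2 ≤ m i),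
    ((t : ℝ) ^ ((d : ℝ) / 2))⁻¹ *
      Real.sqrt ((d.factorial : ℝ) / ∏ i, ((m i).factorial : ℝ)) *
        ∏ i, normHermite (m i) (x i)

/-!
The products `∏ᵢ H_{mᵢ}(xᵢ)` are orthonormal in `L²(γ_t)`: Gaussian integration by parts makes
`x - d/dx` the adjoint of `d/dx`, and since `He_{n+1} = (x - d/dx) He_n` this gives
`∫ p He_n dγ = ∫ p⁽ⁿ⁾ dγ`. By Parseval, `‖H^{nml}‖₂²` is the sum of the squared coefficients,
`t⁻ᵈ ∑ multinomial(m)` over the non-multilinear `m`. All multinomial coefficients sum to `tᵈ`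
and the multilinear ones to `d! · C(t, d)`, so
`‖H^{nml}‖₂² = (tᵈ - t(t-1)⋯(t-d+1)) / tᵈ ≤ C(d, 2) / t`.
-/

open scoped NNReal Nat
open Finset

lemma integrable_eval_gaussianReal (μ : ℝ) (v : ℝ≥0) (p : ℝ[X]) :
    Integrable (fun x => p.eval x) (gaussianReal μ v) := by
  induction p using Polynomial.induction_on' with
  | add p q hp hq => simp only [eval_add]; exact hp.add hq
  | monomial n a =>
    have hpow : Integrable (fun x : ℝ => x ^ n) (gaussianReal μ v) :=
      (memLp_id_gaussianReal n).integrable_norm_pow'.mono' (by fun_prop)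
        (ae_of_all _ fun x => by simp)
    simpa using hpow.const_mul a

lemma integrable_gaussianPDFReal_mul_eval (μ : ℝ) {v : ℝ≥0} (hv : v ≠ 0) (p : ℝ[X]) :
    Integrable (fun x => gaussianPDFReal μ v x * p.eval x) := by
  have h := integrable_eval_gaussianReal μ v p
  rw [gaussianReal_of_var_ne_zero _ hv, integrable_withDensity_iff_integrable_smul'
    (measurable_gaussianPDF _ _) (ae_of_all _ fun _ => gaussianPDF_lt_top)] at h
  simpa only [toReal_gaussianPDF, smul_eq_mul] using h

lemma hasDerivAt_gaussianPDFReal_zero_one (x : ℝ) :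
    HasDerivAt (gaussianPDFReal 0 1) (-x * gaussianPDFReal 0 1 x) x := by
  have hφ : gaussianPDFReal 0 1 = fun y => (√(2 * Real.pi))⁻¹ * Real.exp (-(y ^ 2 / 2)) := by
    ext y; simp [gaussianPDFReal, neg_div]
  rw [hφ]
  have hexp : HasDerivAt (fun y : ℝ => -(y ^ 2 / 2)) (-x) x := by
    simpa using ((hasDerivAt_pow 2 x).div_const 2).fun_neg
  exact (hexp.exp.const_mul _).congr_deriv (by ring)

lemma integral_mul_eval_gaussianReal (p : ℝ[X]) :
    ∫ x, x * p.eval x ∂(gaussianReal 0 1) = ∫ x, p.derivative.eval x ∂(gaussianReal 0 1) := by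
  have hint (q : ℝ[X]) := integrable_gaussianPDFReal_mul_eval 0 one_ne_zero q
  have ibp := integral_mul_deriv_eq_deriv_mul_of_integrable (u := fun x => p.eval x)
    (v := gaussianPDFReal 0 1) (fun x _ => p.hasDerivAt x)
    (fun x _ => hasDerivAt_gaussianPDFReal_zero_one x)
    ((hint (-(X * p))).congr (ae_of_all _ fun x => by simp; ring))
    ((hint p.derivative).congr (ae_of_all _ fun x => by simp; ring))
    ((hint p).congr (ae_of_all _ fun x => by simp; ring))
  simp only [integral_gaussianReal_eq_integral_smul one_ne_zero, smul_eq_mul]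
  calc ∫ x, gaussianPDFReal 0 1 x * (x * p.eval x)
      = -∫ x, p.eval x * (-x * gaussianPDFReal 0 1 x) := by
        rw [← integral_neg]; congr 1; ext x; ring
    _ = ∫ x, gaussianPDFReal 0 1 x * p.derivative.eval x := by
        rw [ibp, neg_neg]; congr 1; ext x; ring

lemma integral_derivative_mul_eval_gaussianReal (p q : ℝ[X]) :
    ∫ x, p.derivative.eval x * q.eval x ∂(gaussianReal 0 1) =
      ∫ x, p.eval x * (X * q - q.derivative).eval x ∂(gaussianReal 0 1) := by
  have hint (r : ℝ[X]) := integrable_eval_gaussianReal 0 1 r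
  calc ∫ x, p.derivative.eval x * q.eval x ∂(gaussianReal 0 1)
      = ∫ x, (p * q).derivative.eval x - (p * q.derivative).eval x ∂(gaussianReal 0 1) := by
        congr 1; ext x; simp [derivative_mul]
    _ = ∫ x, x * (p * q).eval x - (p * q.derivative).eval x ∂(gaussianReal 0 1) := by
        rw [integral_sub (hint _) (hint _), integral_sub _ (hint _), integral_mul_eval_gaussianReal]
        exact (hint (X * (p * q))).congr (ae_of_all _ fun x => by simp)
    _ = _ := by congr 1; ext x; simp; ring

lemma derivative_hermite_succ (n : ℕ) :
    derivative (hermite (n + 1)) = (n + 1 : ℕ) * hermite n := by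
  induction n with
  | zero => simp [hermite_zero]
  | succ n ih =>
    rw [hermite_succ (n + 1), derivative_sub, derivative_mul, derivative_X, one_mul, ih,
      derivative_mul, derivative_natCast, zero_mul, zero_add, hermite_succ n]
    push_cast
    ring

lemma iterate_derivative_hermite_self (n : ℕ) : derivative^[n] (hermite n) = (n ! : ℤ[X]) := by
  induction n with
  | zero => simp [hermite_zero]
  | succ n ih =>
    rw [Function.iterate_succ_apply, derivative_hermite_succ, iterate_derivative_natCast_mul, ih,
      Nat.factorial_succ]
    push_cast; ring

lemma integral_eval_mul_aeval_hermite (p : ℝ[X]) (n : ℕ) :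
    ∫ x, p.eval x * aeval x (hermite n) ∂(gaussianReal 0 1) =
      ∫ x, (derivative^[n] p).eval x ∂(gaussianReal 0 1) := by
  induction n generalizing p with
  | zero => simp [hermite_zero]
  | succ n ih =>
    have hsucc : (hermite (n + 1)).map (algebraMap ℤ ℝ) =
        X * (hermite n).map (algebraMap ℤ ℝ) - derivative ((hermite n).map (algebraMap ℤ ℝ)) := by
      simp [hermite_succ, derivative_map]
    simp_rw [← eval_map_algebraMap, hsucc, ← integral_derivative_mul_eval_gaussianReal,
      eval_map_algebraMap, ih, Function.iterate_succ_apply]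

lemma integral_aeval_hermite_mul_aeval_hermite (m n : ℕ) :
    ∫ x, aeval x (hermite m) * aeval x (hermite n) ∂(gaussianReal 0 1) =
      if m = n then (m ! : ℝ) else 0 := by
  have hiter (m n : ℕ) : ∫ x, aeval x (hermite m) * aeval x (hermite n) ∂(gaussianReal 0 1) =
      ∫ x, (derivative^[n] ((hermite m).map (algebraMap ℤ ℝ))).eval x ∂(gaussianReal 0 1) := by
    simp_rw [← integral_eval_mul_aeval_hermite, eval_map_algebraMap]
  have hlt {m n : ℕ} (h : m < n) :
      ∫ x, aeval x (hermite m) * aeval x (hermite n) ∂(gaussianReal 0 1) = 0 := by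
    rw [hiter, iterate_derivative_eq_zero (natDegree_map_le.trans_lt (by simpa using h))]
    simp
  rcases lt_trichotomy m n with h | rfl | h
  · rw [hlt h, if_neg h.ne]
  · rw [hiter, if_pos rfl, iterate_derivative_map, iterate_derivative_hermite_self]
    simp
  · conv_lhs => enter [2, x]; rw [mul_comm]
    rw [hlt h, if_neg h.ne']

lemma integrable_normHermite_mul (m n : ℕ) :
    Integrable (fun x => normHermite m x * normHermite n x) (gaussianReal 0 1) := by
  refine ((integrable_eval_gaussianReal 0 1
    ((hermite m * hermite n).map (algebraMap ℤ ℝ))).div_const (√(m ! : ℝ) * √(n ! : ℝ))).congr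
    (ae_of_all _ fun x => ?_)
  simp only [normHermite, Polynomial.map_mul, eval_mul, eval_map_algebraMap, div_mul_div_comm]

lemma integral_normHermite_mul (m n : ℕ) :
    ∫ x, normHermite m x * normHermite n x ∂(gaussianReal 0 1) = if m = n then 1 else 0 := by
  simp_rw [normHermite, div_mul_div_comm, integral_div, integral_aeval_hermite_mul_aeval_hermite]
  split_ifs with h
  · subst h
    rw [Real.mul_self_sqrt (Nat.cast_nonneg _), div_self (by positivity)]
  · exact zero_div _

section Product

variable {ι : Type*} [Fintype ι]

lemma integrable_prod_normHermite_mul (m m' : ι → ℕ) :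
    Integrable (fun x : ι → ℝ => (∏ i, normHermite (m i) (x i)) * ∏ i, normHermite (m' i) (x i))
      (Measure.pi fun _ => gaussianReal 0 1) := by
  simp_rw [← prod_mul_distrib]
  exact Integrable.fintype_prod fun i => integrable_normHermite_mul (m i) (m' i)

lemma integral_prod_normHermite_mul (m m' : ι → ℕ) :
    ∫ x : ι → ℝ, (∏ i, normHermite (m i) (x i)) * ∏ i, normHermite (m' i) (x i)
      ∂(Measure.pi fun _ => gaussianReal 0 1) = if m = m' then 1 else 0 := by
  simp_rw [← prod_mul_distrib]
  rw [integral_fintype_prod_eq_prod (fun i y => normHermite (m i) y * normHermite (m' i) y)]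
  simp_rw [integral_normHermite_mul, Fintype.prod_boole, funext_iff]

end Product

lemma integral_sq_sum_of_orthonormal {α κ : Type*} [MeasurableSpace α] [DecidableEq κ]
    {μ : Measure α} {f : κ → α → ℝ} (hint : ∀ m m', Integrable (fun x => f m x * f m' x) μ)
    (horth : ∀ m m', ∫ x, f m x * f m' x ∂μ = if m = m' then 1 else 0)
    (S : Finset κ) (c : κ → ℝ) :
    ∫ x, (∑ m ∈ S, c m * f m x) ^ 2 ∂μ = ∑ m ∈ S, c m ^ 2 := by
  have hexpand (x : α) : (∑ m ∈ S, c m * f m x) ^ 2 =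
      ∑ m ∈ S, ∑ m' ∈ S, c m * c m' * (f m x * f m' x) := by
    rw [sq, sum_mul_sum]
    exact sum_congr rfl fun m _ => sum_congr rfl fun m' _ => by ring
  simp_rw [hexpand]
  rw [integral_finsetSum _ fun m _ => integrable_finsetSum _ fun m' _ => (hint m m').const_mul _]
  simp_rw [integral_finsetSum _ fun m' _ => (hint _ m').const_mul _, integral_const_mul, horth,
    mul_ite, mul_one, mul_zero, sum_ite_eq]
  exact sum_congr rfl fun m hm => by rw [if_pos hm, sq]

lemma Nat.multinomial_eq_factorial_of_le_one {α : Type*} {s : Finset α} {f : α → ℕ}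
    (hf : ∀ i ∈ s, f i ≤ 1) : Nat.multinomial s f = (∑ i ∈ s, f i)! := by
  have hprod : ∏ i ∈ s, (f i)! = 1 := prod_eq_one fun i hi => Nat.factorial_eq_one.mpr (hf i hi)
  simpa [hprod] using Nat.multinomial_spec s f

lemma sum_multinomial_antidiagonalTuple (t d : ℕ) :
    ∑ m ∈ Nat.antidiagonalTuple t d, Nat.multinomial univ m = t ^ d := by
  have h := sum_pow_eq_sum_piAntidiag univ (fun _ : Fin t => 1) d
  simp only [sum_const, card_univ, Fintype.card_fin, smul_eq_mul, mul_one, one_pow,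
    prod_const_one, Nat.cast_id, piAntidiag_univ_fin_eq_antidiagonalTuple] at h
  exact h.symm

lemma card_filter_antidiagonalTuple_le_one (t d : ℕ) :
    #{m ∈ Nat.antidiagonalTuple t d | ∀ i, m i ≤ 1} = t.choose d := by
  rw [show t.choose d = #(powersetCard d (univ : Finset (Fin t))) by simp]
  refine card_nbij' (fun m => univ.filter (m · = 1)) (fun s i => if i ∈ s then 1 else 0) ?_ ?_ ?_ ?_
  · intro m hm
    simp only [coe_filter, Nat.mem_antidiagonalTuple, Set.mem_ofPred_eq] at hm
    simp only [mem_coe, mem_powersetCard, subset_univ, true_and, card_filter]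
    rw [← hm.1]
    exact sum_congr rfl fun i _ => by have := hm.2 i; split_ifs <;> omega
  · intro s hs
    simp only [mem_coe, mem_powersetCard, subset_univ, true_and] at hs
    simp only [coe_filter, Set.mem_ofPred_eq, Nat.mem_antidiagonalTuple, sum_boole,
      filter_mem_eq_inter, univ_inter, Nat.cast_id, hs, true_and]
    intro i
    split_ifs <;> omega
  · intro m hm
    simp only [coe_filter, Set.mem_ofPred_eq] at hm
    ext i
    have := hm.2 i
    simp only [mem_filter, mem_univ, true_and]
    split_ifs <;> omega
  · intro s _
    ext i
    simp

lemma sum_multinomial_filter_exists_two_le (t d : ℕ) :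
    ∑ m ∈ Nat.antidiagonalTuple t d with ∃ i, 2 ≤ m i, Nat.multinomial univ m =
      t ^ d - t.descFactorial d := by
  have hml : ∑ m ∈ Nat.antidiagonalTuple t d with ¬ ∃ i, 2 ≤ m i, Nat.multinomial univ m =
      t.descFactorial d := by
    have hfilter : {m ∈ Nat.antidiagonalTuple t d | ¬ ∃ i, 2 ≤ m i} =
        {m ∈ Nat.antidiagonalTuple t d | ∀ i, m i ≤ 1} := by
      ext m; simp
    rw [hfilter, sum_congr rfl (g := fun _ => d !), sum_const, card_filter_antidiagonalTuple_le_one,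
      smul_eq_mul, Nat.descFactorial_eq_factorial_mul_choose, mul_comm]
    intro m hm
    simp only [mem_filter, Nat.mem_antidiagonalTuple] at hm
    rw [Nat.multinomial_eq_factorial_of_le_one fun i _ => hm.2 i, hm.1]
  have htotal := sum_filter_add_sum_filter_not (Nat.antidiagonalTuple t d)
    (fun m => ∃ i, 2 ≤ m i) (fun m => Nat.multinomial univ m)
  rw [hml, sum_multinomial_antidiagonalTuple] at htotal
  omega

lemma pow_le_descFactorial_add_choose_two_mul (t d : ℕ) :
    t ^ d ≤ t.descFactorial d + d.choose 2 * t ^ (d - 1) := by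
  induction d with
  | zero => simp
  | succ d ih =>
    have hdesc : t.descFactorial d * t ≤ t.descFactorial (d + 1) + d * t ^ d := by
      rw [Nat.descFactorial_succ]
      have := Nat.descFactorial_le_pow t d
      calc t.descFactorial d * t ≤ t.descFactorial d * (t - d + d) := by gcongr; omega
        _ = (t - d) * t.descFactorial d + d * t.descFactorial d := by ring
        _ ≤ (t - d) * t.descFactorial d + d * t ^ d := by gcongr
    have hchoose : d.choose 2 * t ^ (d - 1) * t ≤ d.choose 2 * t ^ d := by
      rcases Nat.eq_zero_or_pos d with rfl | hd
      · simp
      · rw [mul_assoc, pow_sub_one_mul hd.ne']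
    calc t ^ (d + 1) = t ^ d * t := pow_succ t d
      _ ≤ (t.descFactorial d + d.choose 2 * t ^ (d - 1)) * t := by gcongr
      _ ≤ t.descFactorial (d + 1) + (d + d.choose 2) * t ^ d := by rw [add_mul]; nlinarith
      _ = t.descFactorial (d + 1) + (d + 1).choose 2 * t ^ (d + 1 - 1) := by
        rw [Nat.choose_succ_succ, Nat.choose_one_right, Nat.add_sub_cancel]

lemma hermiteNml_coeff_sq {t d : ℕ} {m : Fin t → ℕ} (hm : ∑ i, m i = d) :
    (((t : ℝ) ^ ((d : ℝ) / 2))⁻¹ * √((d ! : ℝ) / ∏ i, ((m i)! : ℝ))) ^ 2 =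
      Nat.multinomial univ m / (t : ℝ) ^ d := by
  have hmult : (d ! : ℝ) / ∏ i, ((m i)! : ℝ) = Nat.multinomial univ m := by
    rw [div_eq_iff (by positivity), mul_comm, ← hm]
    exact_mod_cast (Nat.multinomial_spec univ m).symm
  rw [mul_pow, Real.sq_sqrt (by positivity), hmult, inv_pow, ← Real.rpow_natCast _ 2,
    ← Real.rpow_mul (Nat.cast_nonneg t), Nat.cast_ofNat, div_mul_cancel₀ _ two_ne_zero,
    Real.rpow_natCast, inv_mul_eq_div]

lemma integral_hermiteNml_sq (t d : ℕ) :
    ∫ x, hermiteNml t d x ^ 2 ∂(stdGaussian t) = ((t ^ d - t.descFactorial d : ℕ) : ℝ) / t ^ d := by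
  have h := integral_sq_sum_of_orthonormal (κ := Fin t → ℕ)
    (μ := Measure.pi fun _ : Fin t => gaussianReal 0 1)
    (f := fun m x => ∏ i, normHermite (m i) (x i))
    integrable_prod_normHermite_mul integral_prod_normHermite_mul
    {m ∈ Nat.antidiagonalTuple t d | ∃ i, 2 ≤ m i}
    (fun m => ((t : ℝ) ^ ((d : ℝ) / 2))⁻¹ * √((d ! : ℝ) / ∏ i, ((m i)! : ℝ)))
  refine h.trans ?_
  rw [← sum_multinomial_filter_exists_two_le, Nat.cast_sum, sum_div]
  refine sum_congr rfl fun m hm => ?_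
  rw [hermiteNml_coeff_sq (Nat.mem_antidiagonalTuple.mp (mem_filter.mp hm).1)]

/-- There is an absolute constant `C` such that for all `d ≥ 1`
and `t ≥ d²`, the non-multilinear part of `H_d((X₁+⋯+X_t)/√t)` satisfies
`‖H^{nml}‖₂² ≤ C d²/t` in `L²(γ_t)`. -/
theorem hermite_nonmultilinear_small :
    ∃ C : ℝ, 0 < C ∧ ∀ d t : ℕ, 1 ≤ d → d ^ 2 ≤ t →
      ∫ x, (hermiteNml t d x) ^ 2 ∂(stdGaussian t) ≤ C * (d : ℝ) ^ 2 / t := by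
  refine ⟨1, one_pos, fun d t hd hdt => ?_⟩
  have ht : 0 < t := by nlinarith
  have hcount : (t ^ d - t.descFactorial d) * t ≤ d ^ 2 * t ^ d :=
    calc (t ^ d - t.descFactorial d) * t ≤ d.choose 2 * t ^ (d - 1) * t := by
          gcongr; have := pow_le_descFactorial_add_choose_two_mul t d; omega
      _ = d.choose 2 * t ^ d := by rw [mul_assoc, pow_sub_one_mul (by omega)]
      _ ≤ d ^ 2 * t ^ d := by gcongr; exact Nat.choose_le_pow d 2
  rw [integral_hermiteNml_sq, one_mul, div_le_div_iff₀ (by positivity) (by positivity)]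
  exact_mod_cast hcount
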